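/- For a bordered kernel matrix K_{t+1} = [[K_t, k̄],[k̄^T, k]] with K_t = Φ^T Φ, k̄ = Φ^T φ, k = φ^T φ, and γ > 0, the effective dimension satisfies d_eff(γ)_{t+1} = d_eff(γ)_t + Δ, where Δ = (k - k̄^T (K_t + γI)^{-1} k̄ - γ k̄^T (K_t + γI)^{-2} k̄)/ξ, with ξ = k + γ - k̄^T (K_t + γI)^{-1} k̄. -/

import Mathlib

/-!
Since `M (M + γ)⁻¹ = 1 - γ (M + γ)⁻¹`, the effective dimension is `size - γ · tr (M + γ)⁻¹`, so
only the trace of the resolvent has to be tracked. Inverting the bordered matrix `K' + γ` by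
blocks, its Schur complement is the scalar `ξ`, and the trace of `(K' + γ)⁻¹` exceeds that of
`(K + γ)⁻¹` by `(k̄ᵀ (K + γ)⁻² k̄ + 1) / ξ`. Finally `ξ ≠ 0` because `K'` is the Gram matrix of
`[Φ | φ]`, so `K' + γ` is positive definite and `det (K' + γ) = det (K + γ) · ξ`.
-/

open Matrix

namespace Matrix

variable {m n R : Type*}

theorem transpose_mul_self_fromCols_replicateCol [Fintype m] [CommSemiring R]
    (Φ : Matrix m n R) (φ : m → R) :
    (fromCols Φ (replicateCol Unit φ))ᵀ * fromCols Φ (replicateCol Unit φ) =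
      fromBlocks (Φᵀ * Φ) (replicateCol Unit (Φᵀ *ᵥ φ)) (replicateRow Unit (Φᵀ *ᵥ φ))
        (of fun _ _ => φ ⬝ᵥ φ) := by
  rw [transpose_fromCols, transpose_replicateCol, fromRows_mul_fromCols, replicateCol_mulVec,
    mulVec_transpose, replicateRow_vecMul, replicateRow_mul_replicateCol]

theorem trace_fromBlocks [Fintype m] [Fintype n] [AddCommMonoid R] (A : Matrix m m R)
    (B : Matrix m n R) (C : Matrix n m R) (D : Matrix n n R) :
    trace (fromBlocks A B C D) = trace A + trace D := by
  simp [trace, Fintype.sum_sum_type]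

theorem replicateRow_mul_mul_replicateCol [Fintype n] {ι : Type*} [CommSemiring R] (c b : n → R)
    (M : Matrix n n R) :
    replicateRow ι c * M * replicateCol ι b = of fun _ _ => c ⬝ᵥ (M *ᵥ b) := by
  rw [Matrix.mul_assoc, ← replicateCol_mulVec, replicateRow_mul_replicateCol]

variable [Fintype n] [DecidableEq n]

theorem trace_mul_inv_add_smul_one [CommRing R] (M : Matrix n n R) (γ : R)
    (h : IsUnit (M + γ • 1)) :
    trace (M * (M + γ • 1)⁻¹) = Fintype.card n - γ * trace (M + γ • 1)⁻¹ := by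
  have : M * (M + γ • 1)⁻¹ = (M + γ • 1) * (M + γ • 1)⁻¹ - γ • (M + γ • 1)⁻¹ := by
    rw [Matrix.add_mul, Matrix.smul_mul, Matrix.one_mul, add_sub_cancel_right]
  rw [this, mul_nonsing_inv _ ((isUnit_iff_isUnit_det _).1 h), trace_sub, trace_one, trace_smul,
    smul_eq_mul]

theorem isUnit_transpose_mul_self_add_smul_one {m : Type*} [Fintype m] (G : Matrix m n ℝ)
    {γ : ℝ} (hγ : 0 < γ) : IsUnit (Gᵀ * G + γ • 1) :=
  (PosDef.posSemidef_add (conjTranspose_eq_transpose_of_trivial G ▸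
    posSemidef_conjTranspose_mul_self G) (PosDef.one.smul hγ)).isUnit

section Bordered

variable {𝕜 : Type*} [Field 𝕜] (A : Matrix n n 𝕜) (b c : n → 𝕜) (d : 𝕜)

theorem det_fromBlocks_replicateCol_replicateRow (hA : IsUnit A) :
    det (fromBlocks A (replicateCol Unit b) (replicateRow Unit c) (of fun _ _ => d)) =
      det A * (d - c ⬝ᵥ (A⁻¹ *ᵥ b)) := by
  let := hA.invertible
  rw [det_fromBlocks₁₁, invOf_eq_nonsing_inv, replicateRow_mul_mul_replicateCol]
  simp [det_unique]

theorem trace_inv_fromBlocks_replicateCol_replicateRow (hA : IsUnit A)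
    (hs : d - c ⬝ᵥ (A⁻¹ *ᵥ b) ≠ 0) :
    trace (fromBlocks A (replicateCol Unit b) (replicateRow Unit c) (of fun _ _ => d))⁻¹ =
      trace A⁻¹ + (c ⬝ᵥ ((A⁻¹ ^ 2) *ᵥ b) + 1) / (d - c ⬝ᵥ (A⁻¹ *ᵥ b)) := by
  let := hA.invertible
  have hschur : (of fun _ _ => d) - replicateRow Unit c * A⁻¹ * replicateCol Unit b =
      of fun _ _ => d - c ⬝ᵥ (A⁻¹ *ᵥ b) := by
    rw [replicateRow_mul_mul_replicateCol]
    rfl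
  let := invertibleOfIsUnitDet ((of fun _ _ => d) - replicateRow Unit c * ⅟A * replicateCol Unit b)
    (by rw [invOf_eq_nonsing_inv, hschur, det_unique]; exact hs.isUnit)
  let := fromBlocks₁₁Invertible A (replicateCol Unit b) (replicateRow Unit c) (of fun _ _ => d)
  rw [← invOf_eq_nonsing_inv, invOf_fromBlocks₁₁_eq]
  simp only [invOf_eq_nonsing_inv, hschur, trace_fromBlocks, trace_add]
  set s := d - c ⬝ᵥ (A⁻¹ *ᵥ b)
  set S : Matrix Unit Unit 𝕜 := of fun _ _ => s
  have hmid : replicateRow Unit c * A⁻¹ * (A⁻¹ * replicateCol Unit b * S⁻¹) =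
      (of fun _ _ => c ⬝ᵥ ((A⁻¹ ^ 2) *ᵥ b)) * S⁻¹ := by
    rw [← replicateRow_mul_mul_replicateCol, sq]
    simp only [Matrix.mul_assoc]
  rw [Matrix.mul_assoc (A⁻¹ * replicateCol Unit b * S⁻¹), trace_mul_comm (A⁻¹ * _ * _), hmid]
  simp only [S, trace, diag_apply, Finset.univ_unique, PUnit.default_eq_unit, inv_subsingleton,
    of_apply, Ring.inverse_eq_inv', mul_diagonal, Finset.sum_const, Finset.card_singleton,
    one_smul, diagonal_apply_eq, div_eq_mul_inv]
  ring

end Bordered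

end Matrix

/-- Effective dimension update under bordering: d_eff(γ)_{t+1} = d_eff(γ)_t + Δ. -/
theorem deff_increment {D t : ℕ} (Φ : Matrix (Fin D) (Fin t) ℝ)
    (φ : Fin D → ℝ) (γ : ℝ) (hγ : 0 < γ) :
    let K : Matrix (Fin t) (Fin t) ℝ := Φᵀ * Φ
    let kb : Fin t → ℝ := Φᵀ *ᵥ φ
    let k : ℝ := φ ⬝ᵥ φ
    let K' : Matrix (Fin t ⊕ Unit) (Fin t ⊕ Unit) ℝ :=
      Matrix.fromBlocks K (Matrix.of fun i _ => kb i) (Matrix.of fun _ j => kb j)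
        (Matrix.of fun _ _ => k)
    let ξ : ℝ := k + γ - kb ⬝ᵥ ((K + γ • 1)⁻¹ *ᵥ kb)
    let Δ : ℝ := (k - kb ⬝ᵥ ((K + γ • 1)⁻¹ *ᵥ kb)
        - γ * (kb ⬝ᵥ (((K + γ • 1)⁻¹ ^ 2) *ᵥ kb))) / ξ
    Matrix.trace (K' * (K' + γ • 1)⁻¹) = Matrix.trace (K * (K + γ • 1)⁻¹) + Δ := by
  intro K kb k K' ξ Δ
  have hK' : K' = (fromCols Φ (replicateCol Unit φ))ᵀ * fromCols Φ (replicateCol Unit φ) :=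
    (transpose_mul_self_fromCols_replicateCol Φ φ).symm
  have hA : IsUnit (K + γ • 1) := isUnit_transpose_mul_self_add_smul_one Φ hγ
  have hB : IsUnit (K' + γ • 1) := hK' ▸ isUnit_transpose_mul_self_add_smul_one _ hγ
  have hblocks : K' + γ • 1 = fromBlocks (K + γ • 1) (replicateCol Unit kb)
      (replicateRow Unit kb) (of fun _ _ => k + γ) := by
    rw [← fromBlocks_one, fromBlocks_smul, fromBlocks_add]
    congr 1 <;> ext <;> simp [k]
  have hξ : k + γ - kb ⬝ᵥ ((K + γ • 1)⁻¹ *ᵥ kb) ≠ 0 := by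
    have := ((isUnit_iff_isUnit_det _).1 hB).ne_zero
    rw [hblocks, det_fromBlocks_replicateCol_replicateRow _ _ _ _ hA] at this
    exact right_ne_zero_of_mul this
  rw [trace_mul_inv_add_smul_one _ _ hB, trace_mul_inv_add_smul_one _ _ hA, hblocks,
    trace_inv_fromBlocks_replicateCol_replicateRow _ _ _ _ hA hξ]
  simp only [Δ, ξ, Fintype.card_sum, Fintype.card_fin, Fintype.card_unit, Nat.cast_add,
    Nat.cast_one]
  field_simp
  ring
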